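/- (Proposition, part (ii).) Let (ψ_c)_{c≥1} be a sequence of nonnegative reals with ∑_{c=1}^{∞} ψ_c = 1, let n ≥ 1, let Z_1, …, Z_n be positive integers with Z* = max_{1≤i≤n} Z_i, and let U_1, …, U_n be reals satisfying 0 < U_i < ψ_{Z_i} for each i. Set U* = min_{1≤i≤n} U_i and define C* = min{ c ∈ ℤ⁺ : ∑_{l=1}^{c} ψ_l > 1 − U* }. Then C* ≥ Z*. -/

import Mathlib

open Finset

lemma sum_Icc_add_le_of_hasSum_succ {ψ : ℕ → ℝ} {s : ℝ} (hψ : ∀ c, 1 ≤ c → 0 ≤ ψ c)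
    (hsum : HasSum (fun c : ℕ => ψ (c + 1)) s) {C k : ℕ} (hk : C < k) :
    ∑ l ∈ Icc 1 C, ψ l + ψ k ≤ s := by
  obtain ⟨j, rfl⟩ : ∃ j, k = j + 1 := Nat.exists_eq_succ_of_ne_zero (by omega)
  have hj : j ∉ range C := by
    rw [mem_range]
    omega
  have hIcc : ∑ l ∈ Icc 1 C, ψ l = ∑ c ∈ range C, ψ (c + 1) := by
    rw [range_eq_Ico, sum_Ico_add', zero_add, Ico_add_one_right_eq_Icc]
  calc ∑ l ∈ Icc 1 C, ψ l + ψ (j + 1) = ∑ c ∈ insert j (range C), ψ (c + 1) := by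
        rw [sum_insert hj, hIcc, add_comm]
    _ ≤ s := sum_le_hasSum _ (fun c _ => hψ (c + 1) c.succ_pos) hsum

theorem truncation_at_least_max_allocation_general (ψ : ℕ → ℝ) (hψ : ∀ c, 1 ≤ c → 0 ≤ ψ c)
    (hsum : HasSum (fun c : ℕ => ψ (c + 1)) 1)
    (n : ℕ) (Z : Fin n → ℕ)
    (Zstar : ℕ) (hZstar : IsGreatest (Set.range Z) Zstar)
    (U : Fin n → ℝ) (hU : ∀ i, 0 < U i ∧ U i < ψ (Z i))
    (Ustar : ℝ) (hUstar : IsLeast (Set.range U) Ustar)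
    (Cstar : ℕ)
    (hCstar : IsLeast {c : ℕ | 1 ≤ c ∧ 1 - Ustar < ∑ l ∈ Finset.Icc 1 c, ψ l} Cstar) :
    Zstar ≤ Cstar := by
  by_contra! hlt
  obtain ⟨⟨i, rfl⟩, -⟩ := hZstar
  -- Otherwise the weights up to `Cstar` and the weight `ψ (Z i) > U i ≥ Ustar` would exceed 1.
  have hUstar_le : Ustar ≤ U i := hUstar.2 ⟨i, rfl⟩
  have htotal := sum_Icc_add_le_of_hasSum_succ hψ hsum hlt
  linarith [hCstar.1.2, (hU i).2]

/-- Proposition, part (ii): if the nonnegative weights `ψ 1, ψ 2, …` sum to `1`,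
`Z 1, …, Z n` are positive integer allocations with maximum `Zstar`, the slice variables
satisfy `0 < U i < ψ (Z i)`, `Ustar` is the minimum of the `U i`, and `Cstar` is the least
positive integer `c` with `∑_{l=1}^{c} ψ_l > 1 - Ustar`, then `Cstar ≥ Zstar`. -/
theorem truncation_at_least_max_allocation (ψ : ℕ → ℝ) (hψ : ∀ c, 1 ≤ c → 0 ≤ ψ c)
    (hsum : HasSum (fun c : ℕ => ψ (c + 1)) 1)
    (n : ℕ) (hn : 1 ≤ n) (Z : Fin n → ℕ) (hZ : ∀ i, 1 ≤ Z i)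
    (Zstar : ℕ) (hZstar : IsGreatest (Set.range Z) Zstar)
    (U : Fin n → ℝ) (hU : ∀ i, 0 < U i ∧ U i < ψ (Z i))
    (Ustar : ℝ) (hUstar : IsLeast (Set.range U) Ustar)
    (Cstar : ℕ)
    (hCstar : IsLeast {c : ℕ | 1 ≤ c ∧ 1 - Ustar < ∑ l ∈ Finset.Icc 1 c, ψ l} Cstar) :
    Zstar ≤ Cstar :=
  truncation_at_least_max_allocation_general ψ hψ hsum n Z Zstar hZstar U hU Ustar hUstar Cstar
    hCstar
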